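/- Let w₁₂, w₃₄ : (0,∞) → (0,∞) be decreasing functions with w₁₂(r)·w₃₄(r) = r^{-2} for all r > 0. Then there is an absolute constant C > 0 such that for all measurable ψ₁, ψ₂, ψ₃, ψ₄ : (0,∞) → ℂ, |M_{4,1}(ψ₁,ψ₂,ψ₃,ψ₄)| ≤ C ‖w₁₂·ψ₁ψ₂‖_{L¹} ‖w₃₄·ψ₃ψ₄‖_{L¹} whenever the right-hand side is finite. -/

import Mathlib

/-!
Since `r⁻² = w₁₂(r) w₃₄(r)`, the integrand of `M_{4,1}` factors as
`(w₁₂ A_θ[ψ₁,ψ₂])(r) · w₃₄(r) Re(ψ̄₃ψ₄)(r) r`. As `w₁₂` decreases,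
`w₁₂(r) |A_θ(r)| ≤ ½ ∫₀^r w₁₂(t) |ψ₁ψ₂|(t) t dt`, so the first factor is bounded uniformly in `r`
by the weighted `L¹` norm of `ψ₁ψ₂`, and integrating the second factor gives that of `ψ₃ψ₄`.
The constant obtained is `C = 1/(4π)`.
-/

open MeasureTheory Set
open scoped ENNReal

/-- The measure `2π r dr` on `(0,∞)`. -/
noncomputable def rmeas : Measure ℝ :=
  (volume.restrict (Set.Ioi (0:ℝ))).withDensity (fun r => ENNReal.ofReal (2 * Real.pi * r))

/-- `Re(conj ψ₁ ψ₂)(r)`. -/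
noncomputable def Re2 (ψ₁ ψ₂ : ℝ → ℂ) (r : ℝ) : ℝ := ((starRingEnd ℂ) (ψ₁ r) * ψ₂ r).re

/-- `A_θ[ψ₁,ψ₂](r) = -(1/2)∫₀^r Re(conj ψ₁ ψ₂)(r') r' dr'`. -/
noncomputable def Atheta2 (ψ₁ ψ₂ : ℝ → ℂ) (r : ℝ) : ℝ :=
  -(1/2) * ∫ t in (0:ℝ)..r, Re2 ψ₁ ψ₂ t * t

/-- `M_{4,1}(ψ₁,ψ₂,ψ₃,ψ₄) = 2π∫₀^∞ r^{-2} A_θ[ψ₁,ψ₂](r) Re(conj ψ₃ ψ₄)(r) r dr`. -/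
noncomputable def M41 (ψ₁ ψ₂ ψ₃ ψ₄ : ℝ → ℂ) : ℝ :=
  2 * Real.pi * ∫ r in Set.Ioi (0:ℝ), (r ^ 2)⁻¹ * Atheta2 ψ₁ ψ₂ r * Re2 ψ₃ ψ₄ r * r

lemma lintegral_rmeas (f : ℝ → ℝ≥0∞) :
    ∫⁻ r, f r ∂rmeas = ∫⁻ r in Ioi 0, ENNReal.ofReal (2 * Real.pi * r) * f r :=
  lintegral_withDensity_eq_lintegral_mul_non_measurable _
    (ENNReal.measurable_ofReal.comp (measurable_const.mul measurable_id))
    (Filter.Eventually.of_forall fun _ => ENNReal.ofReal_lt_top) f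

noncomputable def weightedMass (w : ℝ → ℝ) (φ : ℝ → ℂ) : ℝ≥0∞ :=
  ∫⁻ r in Ioi 0, ENNReal.ofReal (w r * (‖φ r‖ * r))

lemma eLpNorm_one_rmeas_ofReal_mul {w : ℝ → ℝ} (hw : ∀ r, 0 < r → 0 ≤ w r) (φ : ℝ → ℂ) :
    eLpNorm (fun r => (w r : ℂ) * φ r) 1 rmeas
      = ENNReal.ofReal (2 * Real.pi) * weightedMass w φ := by
  rw [eLpNorm_one_eq_lintegral_enorm, lintegral_rmeas,
    weightedMass, ← lintegral_const_mul' _ _ ENNReal.ofReal_ne_top]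
  refine setLIntegral_congr_fun measurableSet_Ioi fun r (hr : 0 < r) => ?_
  rw [← ofReal_norm, norm_mul, Complex.norm_real, Real.norm_of_nonneg (hw r hr),
    ← ENNReal.ofReal_mul (by positivity), ← ENNReal.ofReal_mul (by positivity)]
  ring_nf

lemma abs_Re2_le (ψ₁ ψ₂ : ℝ → ℂ) (r : ℝ) : |Re2 ψ₁ ψ₂ r| ≤ ‖ψ₁ r * ψ₂ r‖ := by
  simpa [Re2, norm_mul] using Complex.abs_re_le_norm ((starRingEnd ℂ) (ψ₁ r) * ψ₂ r)

lemma ofReal_mul_abs_intervalIntegral_le {w : ℝ → ℝ} (hw : AntitoneOn w (Ioi 0)) (f : ℝ → ℝ)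
    {r : ℝ} (hr : 0 < r) :
    ENNReal.ofReal (w r * |∫ t in (0:ℝ)..r, f t|)
      ≤ ∫⁻ t in Ioi 0, ENNReal.ofReal (w t * |f t|) := by
  rw [intervalIntegral.integral_of_le hr.le, ENNReal.ofReal_mul' (abs_nonneg _),
    ← Real.norm_eq_abs, ofReal_norm]
  calc ENNReal.ofReal (w r) * ‖∫ t in Ioc 0 r, f t‖ₑ
      ≤ ENNReal.ofReal (w r) * ∫⁻ t in Ioc 0 r, ‖f t‖ₑ := by
        gcongr; exact enorm_integral_le_lintegral_enorm f
    _ = ∫⁻ t in Ioc 0 r, ENNReal.ofReal (w r) * ‖f t‖ₑ :=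
        (lintegral_const_mul' _ _ ENNReal.ofReal_ne_top).symm
    _ ≤ ∫⁻ t in Ioc 0 r, ENNReal.ofReal (w t * |f t|) := by
        refine lintegral_mono_ae <| (ae_restrict_iff' measurableSet_Ioc).2 <|
          Filter.Eventually.of_forall fun t ⟨ht, htr⟩ => ?_
        rw [ENNReal.ofReal_mul' (abs_nonneg _), ← Real.norm_eq_abs, ofReal_norm]
        gcongr
        exact hw ht (hr : r ∈ Ioi 0) htr
    _ ≤ ∫⁻ t in Ioi 0, ENNReal.ofReal (w t * |f t|) := lintegral_mono_set Ioc_subset_Ioi_self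

lemma ofReal_mul_abs_Atheta2_le {w : ℝ → ℝ} (hw : AntitoneOn w (Ioi 0)) (ψ₁ ψ₂ : ℝ → ℂ)
    {r : ℝ} (hr : 0 < r) :
    ENNReal.ofReal (w r * |Atheta2 ψ₁ ψ₂ r|)
      ≤ ENNReal.ofReal (1 / 2) * weightedMass w (fun t => ψ₁ t * ψ₂ t) := by
  have hA : w r * |Atheta2 ψ₁ ψ₂ r| = 1 / 2 * (w r * |∫ t in (0:ℝ)..r, Re2 ψ₁ ψ₂ t * t|) := by
    rw [Atheta2, abs_mul]; norm_num; ring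
  rw [hA, ENNReal.ofReal_mul (by norm_num)]
  gcongr
  refine (ofReal_mul_abs_intervalIntegral_le hw _ hr).trans <|
    setLIntegral_mono' measurableSet_Ioi fun t (ht : 0 < t) => ?_
  rw [ENNReal.ofReal_mul' (abs_nonneg _), ENNReal.ofReal_mul' (by positivity), abs_mul,
    abs_of_pos ht]
  gcongr
  exact abs_Re2_le ψ₁ ψ₂ t

lemma aemeasurable_ofReal_weightedMass_integrand {w : ℝ → ℝ} (hw : AntitoneOn w (Ioi 0))
    {φ : ℝ → ℂ} (hφ : Measurable φ) :
    AEMeasurable (fun r => ENNReal.ofReal (w r * (‖φ r‖ * r))) (volume.restrict (Ioi 0)) :=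
  ENNReal.measurable_ofReal.comp_aemeasurable <|
    (aemeasurable_restrict_of_antitoneOn measurableSet_Ioi hw).mul
      (hφ.norm.mul measurable_id).aemeasurable

lemma ofReal_abs_M41_le {w₁₂ w₃₄ : ℝ → ℝ} (hw₁₂ : AntitoneOn w₁₂ (Ioi 0))
    (hw₃₄ : AntitoneOn w₃₄ (Ioi 0)) (hw₃₄_nonneg : ∀ r, 0 < r → 0 ≤ w₃₄ r)
    (hprod : ∀ r, 0 < r → w₁₂ r * w₃₄ r = (r ^ 2)⁻¹) {ψ₁ ψ₂ ψ₃ ψ₄ : ℝ → ℂ}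
    (hψ₃ : Measurable ψ₃) (hψ₄ : Measurable ψ₄) :
    ENNReal.ofReal |M41 ψ₁ ψ₂ ψ₃ ψ₄|
      ≤ ENNReal.ofReal Real.pi * weightedMass w₁₂ (fun r => ψ₁ r * ψ₂ r)
        * weightedMass w₃₄ (fun r => ψ₃ r * ψ₄ r) := by
  set K := weightedMass w₁₂ (fun r => ψ₁ r * ψ₂ r)
  have hpointwise : ∀ r ∈ Ioi (0:ℝ), ‖(r ^ 2)⁻¹ * Atheta2 ψ₁ ψ₂ r * Re2 ψ₃ ψ₄ r * r‖ₑ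
      ≤ ENNReal.ofReal (1 / 2) * K * ENNReal.ofReal (w₃₄ r * (‖ψ₃ r * ψ₄ r‖ * r)) := by
    intro r (hr : 0 < r)
    have hsplit : |(r ^ 2)⁻¹ * Atheta2 ψ₁ ψ₂ r * Re2 ψ₃ ψ₄ r * r|
        = w₁₂ r * |Atheta2 ψ₁ ψ₂ r| * (w₃₄ r * (|Re2 ψ₃ ψ₄ r| * r)) := by
      rw [abs_mul, abs_mul, abs_mul, abs_of_pos hr, abs_of_pos (by positivity), ← hprod r hr]
      ring
    rw [← ofReal_norm, Real.norm_eq_abs, hsplit,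
      ENNReal.ofReal_mul' (mul_nonneg (hw₃₄_nonneg r hr) (by positivity))]
    gcongr
    · exact ofReal_mul_abs_Atheta2_le hw₁₂ ψ₁ ψ₂ hr
    · exact hw₃₄_nonneg r hr
    · exact abs_Re2_le ψ₃ ψ₄ r
  have h2pi : ENNReal.ofReal (2 * Real.pi) * ENNReal.ofReal (1 / 2) = ENNReal.ofReal Real.pi := by
    rw [← ENNReal.ofReal_mul Real.two_pi_pos.le]; ring_nf
  calc ENNReal.ofReal |M41 ψ₁ ψ₂ ψ₃ ψ₄|
      = ENNReal.ofReal (2 * Real.pi)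
          * ‖∫ r in Ioi 0, (r ^ 2)⁻¹ * Atheta2 ψ₁ ψ₂ r * Re2 ψ₃ ψ₄ r * r‖ₑ := by
        rw [M41, abs_mul, abs_of_pos Real.two_pi_pos, ENNReal.ofReal_mul Real.two_pi_pos.le,
          ← Real.norm_eq_abs, ofReal_norm]
    _ ≤ ENNReal.ofReal (2 * Real.pi)
          * ∫⁻ r in Ioi 0, ‖(r ^ 2)⁻¹ * Atheta2 ψ₁ ψ₂ r * Re2 ψ₃ ψ₄ r * r‖ₑ := by
        gcongr; exact enorm_integral_le_lintegral_enorm _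
    _ ≤ ENNReal.ofReal (2 * Real.pi)
          * ∫⁻ r in Ioi 0, ENNReal.ofReal (1 / 2) * K
            * ENNReal.ofReal (w₃₄ r * (‖ψ₃ r * ψ₄ r‖ * r)) :=
        mul_le_mul_right (setLIntegral_mono' measurableSet_Ioi hpointwise) _
    _ = ENNReal.ofReal Real.pi * K * weightedMass w₃₄ (fun r => ψ₃ r * ψ₄ r) := by
        -- `K` may be `∞`, so pulling it out of the integral needs measurability
        rw [lintegral_const_mul'' _ (aemeasurable_ofReal_weightedMass_integrand hw₃₄
          (φ := fun r => ψ₃ r * ψ₄ r) (by fun_prop)), weightedMass, ← h2pi]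
        ring

/-- Duality estimate (weighted `L¹`-type) for `M_{4,1}`. -/
theorem duality_estimate_M41_weighted :
    ∃ C : ℝ, 0 < C ∧
      ∀ w₁₂ w₃₄ : ℝ → ℝ,
        (∀ r : ℝ, 0 < r → 0 < w₁₂ r) → (∀ r : ℝ, 0 < r → 0 < w₃₄ r) →
        (∀ r s : ℝ, 0 < r → r ≤ s → w₁₂ s ≤ w₁₂ r) →
        (∀ r s : ℝ, 0 < r → r ≤ s → w₃₄ s ≤ w₃₄ r) →
        (∀ r : ℝ, 0 < r → w₁₂ r * w₃₄ r = (r ^ 2)⁻¹) →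
        ∀ ψ₁ ψ₂ ψ₃ ψ₄ : ℝ → ℂ,
          Measurable ψ₁ → Measurable ψ₂ → Measurable ψ₃ → Measurable ψ₄ →
          ENNReal.ofReal |M41 ψ₁ ψ₂ ψ₃ ψ₄| ≤
            ENNReal.ofReal C
              * eLpNorm (fun r => ((w₁₂ r : ℝ) : ℂ) * (ψ₁ r * ψ₂ r)) 1 rmeas
              * eLpNorm (fun r => ((w₃₄ r : ℝ) : ℂ) * (ψ₃ r * ψ₄ r)) 1 rmeas := by
  refine ⟨(4 * Real.pi)⁻¹, by positivity, fun w₁₂ w₃₄ h₁₂pos h₃₄pos h₁₂anti h₃₄anti hprod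
    ψ₁ ψ₂ ψ₃ ψ₄ _ _ hψ₃ hψ₄ => ?_⟩
  have hC : ENNReal.ofReal (4 * Real.pi)⁻¹ * ENNReal.ofReal (2 * Real.pi)
      * ENNReal.ofReal (2 * Real.pi) = ENNReal.ofReal Real.pi := by
    rw [← ENNReal.ofReal_mul (by positivity), ← ENNReal.ofReal_mul (by positivity)]
    congr 1
    field_simp
    ring
  rw [eLpNorm_one_rmeas_ofReal_mul fun r hr => (h₁₂pos r hr).le,
    eLpNorm_one_rmeas_ofReal_mul fun r hr => (h₃₄pos r hr).le]
  calc ENNReal.ofReal |M41 ψ₁ ψ₂ ψ₃ ψ₄|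
      ≤ ENNReal.ofReal Real.pi * weightedMass w₁₂ (fun r => ψ₁ r * ψ₂ r)
        * weightedMass w₃₄ (fun r => ψ₃ r * ψ₄ r) :=
        ofReal_abs_M41_le (fun r hr s _ hrs => h₁₂anti r s hr hrs)
          (fun r hr s _ hrs => h₃₄anti r s hr hrs) (fun r hr => (h₃₄pos r hr).le) hprod hψ₃ hψ₄
    _ = _ := by rw [← hC]; ring
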